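/- Let V be a real normed vector space, let K be a nonzero real number, let A > 0, and let X : V → V be positively homogeneous of degree −1, i.e. X(c v) = c⁻¹ X(v) for all c > 0 and v ∈ V. Define ψ(t) = A·e^{2K²t}. If g : ℝ → V is differentiable and satisfies g′(t) = −2·X(g(t)) − 2K²·g(t) for all t ≥ 0, then the curve g̃(t) := ψ(t)·g(t) satisfies d/dt g̃(t) = −2ψ(t)²·X(g̃(t)) for all t ≥ 0. (Since the time reparameterization t̃ with dt̃/dt = ψ(t)² converts this to dg̃/dt̃ = −2X(g̃), this says the normalized flow ∂g/∂t = −2X(g) − 2K²g differs from the flow ∂g/∂t = −2X(g) only by a change of scale in space and time.) -/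

import Mathlib

/-- The normalized cross curvature flow `∂g/∂t = −2X(g) − 2K²g` differs from
`∂g/∂t = −2X(g)` by a change of scale in space and time: if `X` is positively
homogeneous of degree `−1` and `ψ(t) = A e^{2K²t}`, then `g̃ = ψ g` satisfies
`dg̃/dt = −2ψ² X(g̃)`. -/
theorem kxcf_rescaling {V : Type*} [NormedAddCommGroup V] [NormedSpace ℝ V]
    (K A : ℝ) (hK : K ≠ 0) (hA : 0 < A)
    (X : V → V) (hX : ∀ c : ℝ, 0 < c → ∀ v : V, X (c • v) = c⁻¹ • X v)
    (ψ : ℝ → ℝ) (hψ : ∀ t, ψ t = A * Real.exp (2 * K ^ 2 * t))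
    (g : ℝ → V)
    (hg : ∀ t : ℝ, 0 ≤ t →
      HasDerivAt g ((-2 : ℝ) • X (g t) - (2 * K ^ 2) • g t) t) :
    ∀ t : ℝ, 0 ≤ t →
      HasDerivAt (fun s => ψ s • g s)
        ((-2 * (ψ t) ^ 2) • X (ψ t • g t)) t := by
  intro t ht
  have hψpos : ∀ s, 0 < ψ s := by
    intro s; rw [hψ]; positivity
  have hψ' : HasDerivAt ψ (2 * K ^ 2 * ψ t) t := by
    have h1 : HasDerivAt (fun s => A * Real.exp (2 * K ^ 2 * s))
        (A * (Real.exp (2 * K ^ 2 * t) * (2 * K ^ 2 * 1))) t := by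
      exact ((Real.hasDerivAt_exp _).comp t
        ((hasDerivAt_id t).const_mul (2 * K ^ 2))).const_mul A
    have he : ψ = fun s => A * Real.exp (2 * K ^ 2 * s) := funext hψ
    rw [he]
    convert h1 using 1
    simp only []; ring
  have h := hψ'.smul (hg t ht)
  have key : ψ t • ((-2 : ℝ) • X (g t) - (2 * K ^ 2) • g t) +
      (2 * K ^ 2 * ψ t) • g t
      = (-2 * (ψ t) ^ 2) • X (ψ t • g t) := by
    rw [hX (ψ t) (hψpos t) (g t), smul_smul]
    have hne : ψ t ≠ 0 := (hψpos t).ne'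
    have hc : -2 * ψ t ^ 2 * (ψ t)⁻¹ = ψ t * -2 := by field_simp
    rw [hc]
    module
  rw [key] at h
  exact h
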